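/- For any partitions λ and μ, and any two finite sets of variables x = (x_1,…,x_N) and y = (y_1,…,y_M), the following polynomial identity holds: ∑_η ∑_{τ∈η−□} s_{λ/η}(x)·s_{μ/τ}(y) = ∑_η ∑_{α∈λ−□} s_{α/η}(x)·s_{μ/η}(y), where both outer sums run over all partitions η (only finitely many terms are nonzero). -/

import Mathlib

open scoped BigOperators

noncomputable section

/-- `AddBox lam mu` says that `mu` is obtained from `lam` by adding a single box,
i.e. `mu ∈ lam + □`, equivalently `lam ∈ mu − □`. -/
def AddBox (lam mu : YoungDiagram) : Prop :=
  lam.cells ⊆ mu.cells ∧ mu.card = lam.card + 1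

/-- The complete homogeneous symmetric polynomial `h_n` in the variables indexed by `σ`:
the sum of all monomials of degree `n`. -/
def hPoly (σ : Type) [Fintype σ] [DecidableEq σ] (n : ℕ) : MvPolynomial σ ℚ :=
  ∑ m : Sym σ n, ((m : Multiset σ).map MvPolynomial.X).prod

/-- `h_n`, extended by `0` to negative indices. -/
def hPolyZ (σ : Type) [Fintype σ] [DecidableEq σ] (n : ℤ) : MvPolynomial σ ℚ :=
  if 0 ≤ n then hPoly σ n.toNat else 0

/-- The skew Schur polynomial `s_{μ/ν}(x)` in the variables indexed by `σ`, via the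
Jacobi–Trudi determinant; it vanishes unless `ν ⊆ μ`, and `s_μ = s_{μ/∅}`. -/
def skewSchurPoly (σ : Type) [Fintype σ] [DecidableEq σ] (mu nu : YoungDiagram) :
    MvPolynomial σ ℚ :=
  Matrix.det fun i j : Fin (mu.card + nu.card) =>
    hPolyZ σ ((mu.rowLen i : ℤ) - (nu.rowLen j : ℤ) - (i.1 : ℤ) + (j.1 : ℤ))

/-- The one-box partition `□ = (1)` as a Young diagram. -/
def box : YoungDiagram := YoungDiagram.ofRowLens [1] (by decide)

/-!
Write `s_{λ/η}` as the Jacobi–Trudi determinant `det (h_{λ_i - η_j - i + j})_{i,j<n}`, valid for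
every `n ≥ |λ| + |η|`, and let `A` be this matrix for `s_{λ/τ}` and `B` the same matrix with every
index lowered by one. Adding a box to row `j` of `τ` replaces column `j` of `A` by column `j` of
`B`; removing a box from row `i` of `λ` replaces row `i` of `A` by row `i` of `B`. Where no box can
be added (removed), the new column (row) repeats a neighbour or is zero, so the determinant
vanishes. Both sums of determinants, over replaced columns and over replaced rows, are the
coefficient of `t` in `det (A + t B)`, so `∑_{η ∈ τ+□} s_{λ/η} = ∑_{α ∈ λ−□} s_{α/τ}`.
Multiplying by `s_{μ/τ}(y)` and summing over `τ` gives the theorem.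
-/

open Finset Function

namespace Matrix

variable {n R : Type*} [Fintype n] [DecidableEq n] [CommRing R]

theorem sum_det_updateRow_eq_sum_det_updateCol (A B : Matrix n n R) :
    ∑ i, (A.updateRow i (B i)).det = ∑ j, (A.updateCol j fun i => B i j).det := by
  simp only [det_apply]
  rw [sum_comm]
  conv_rhs => rw [sum_comm]
  refine sum_congr rfl fun σ _ => ?_
  rw [← Equiv.sum_comp σ]
  refine sum_congr rfl fun j _ => ?_
  congr 2 with i
  simp only [updateRow_apply, updateCol_apply, σ.injective.eq_iff]
  split_ifs with hij <;> simp [hij]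

end Matrix

section JacobiTrudi

variable {R : Type*} (h : ℤ → R)

def jacobiTrudi (n : ℕ) (a b : ℕ → ℤ) : Matrix (Fin n) (Fin n) R :=
  Matrix.of fun i j => h (a i - b j - (i : ℕ) + (j : ℕ))

variable {n : ℕ}

theorem jacobiTrudi_update_right (a b : ℕ → ℤ) (j : Fin n) :
    jacobiTrudi h n a (update b j (b j + 1)) =
      (jacobiTrudi h n a b).updateCol j fun i => jacobiTrudi h n (a - 1) b i j := by
  ext i k
  rcases eq_or_ne k j with rfl | hkj
  · simp only [jacobiTrudi, Matrix.updateCol_self, Matrix.of_apply, update_self, Pi.sub_apply,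
      Pi.one_apply]
    ring_nf
  · simp [jacobiTrudi, Matrix.updateCol_ne hkj, Fin.val_injective.ne hkj]

theorem jacobiTrudi_update_left (a b : ℕ → ℤ) (i : Fin n) :
    jacobiTrudi h n (update a i (a i - 1)) b =
      (jacobiTrudi h n a b).updateRow i (jacobiTrudi h n (a - 1) b i) := by
  ext k j
  rcases eq_or_ne k i with rfl | hki
  · simp [jacobiTrudi]
  · simp [jacobiTrudi, Matrix.updateRow_ne hki, Fin.val_injective.ne hki]

theorem sum_det_jacobiTrudi_update_right_eq_sum_update_left [CommRing R] (a b : ℕ → ℤ) :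
    ∑ j : Fin n, (jacobiTrudi h n a (update b j (b j + 1))).det =
      ∑ i : Fin n, (jacobiTrudi h n (update a i (a i - 1)) b).det := by
  simp only [jacobiTrudi_update_right, jacobiTrudi_update_left]
  exact (Matrix.sum_det_updateRow_eq_sum_det_updateCol _ _).symm

theorem det_jacobiTrudi_update_right_eq_zero [CommRing R] {a b : ℕ → ℤ} {j : ℕ} (hj : j + 1 < n)
    (hb : b j = b (j + 1)) : (jacobiTrudi h n a (update b (j + 1) (b (j + 1) + 1))).det = 0 := by
  refine Matrix.det_zero_of_column_eq (i := ⟨j, by omega⟩) (j := ⟨j + 1, hj⟩)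
    (by simp) fun k => ?_
  simp only [jacobiTrudi, Matrix.of_apply, update_self, update_of_ne (by omega : j ≠ j + 1), hb]
  congr 1
  push_cast
  ring

theorem det_jacobiTrudi_update_left_eq_zero [CommRing R] {a b : ℕ → ℤ} {i : ℕ} (hi : i + 1 < n)
    (ha : a i = a (i + 1)) : (jacobiTrudi h n (update a i (a i - 1)) b).det = 0 := by
  refine Matrix.det_zero_of_row_eq (i := ⟨i, by omega⟩) (j := ⟨i + 1, hi⟩) (by simp) ?_
  ext k
  simp only [jacobiTrudi, Matrix.of_apply, update_self,
    update_of_ne (by omega : i + 1 ≠ i), ha]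
  congr 1
  push_cast
  ring

variable {h} [CommRing R]

theorem det_jacobiTrudi_update_left_eq_zero_of_le (hneg : ∀ z < 0, h z = 0) {a b : ℕ → ℤ}
    {i : ℕ} (hi : i + 1 = n) (hab : ∀ j, a i ≤ b j) :
    (jacobiTrudi h n (update a i (a i - 1)) b).det = 0 := by
  refine Matrix.det_eq_zero_of_row_eq_zero ⟨i, by omega⟩ fun j => hneg _ ?_
  have := hab j
  have := j.is_lt
  simp only [update_self]
  omega

theorem det_jacobiTrudi_succ (h0 : h 0 = 1) (hneg : ∀ z < 0, h z = 0) {a b : ℕ → ℤ}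
    (hab : a n = b n) (hb : ∀ j < n, a n ≤ b j) :
    (jacobiTrudi h (n + 1) a b).det = (jacobiTrudi h n a b).det := by
  rw [Matrix.det_succ_row _ (Fin.last n), sum_eq_single (Fin.last n)]
  · have hsub : (jacobiTrudi h (n + 1) a b).submatrix (Fin.last n).succAbove
        (Fin.last n).succAbove = jacobiTrudi h n a b := by
      ext i j
      simp [jacobiTrudi, Fin.succAbove_last]
    rw [hsub]
    simp [jacobiTrudi, hab, h0]
  · intro j _ hj
    have hjn := Fin.val_lt_last hj
    rw [show jacobiTrudi h (n + 1) a b (Fin.last n) j = 0 from hneg _ (by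
      have := hb j hjn; simp only [Fin.val_last]; omega)]
    ring
  · simp

theorem det_jacobiTrudi_eq_zero_of_lt (hneg : ∀ z < 0, h z = 0) {a b : ℕ → ℤ}
    (ha : Antitone a) (hb : Antitone b) {k : ℕ} (hk : k < n) (hab : a k < b k) :
    (jacobiTrudi h n a b).det = 0 := by
  refine (Matrix.det_apply _).trans (sum_eq_zero fun σ _ => ?_)
  -- pigeonhole: `σ` cannot map the `k + 1` indices `≤ k` into the `k` indices `< k`
  obtain ⟨i, hik, hkσ⟩ : ∃ i : Fin n, (i : ℕ) ≤ k ∧ k ≤ σ i := by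
    by_contra! hσ
    have hinj : Injective fun m : Fin (k + 1) =>
        (⟨σ (Fin.castLE hk m), hσ _ (Nat.le_of_lt_succ m.is_lt)⟩ : Fin k) :=
      fun m m' hmm' => Fin.castLE_injective hk (σ.injective (Fin.ext (Fin.mk.inj hmm')))
    simpa using Fintype.card_le_of_injective _ hinj
  have hentry : jacobiTrudi h n a b (σ i) i = 0 := by
    refine hneg _ ?_
    have := ha hkσ
    have := hb hik
    omega
  rw [prod_eq_zero (f := fun i => jacobiTrudi h n a b (σ i) i) (mem_univ i) hentry, smul_zero]

end JacobiTrudi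

section Finsum

variable {α β M : Type*} [AddCommMonoid M]

theorem finsum_comm_of_hasFiniteSupport {f : α → β → M} (hf : (uncurry f).HasFiniteSupport) :
    ∑ᶠ a, ∑ᶠ b, f a b = ∑ᶠ b, ∑ᶠ a, f a b := by
  have hf' : (uncurry fun b a => f a b).HasFiniteSupport :=
    (Set.Finite.image Prod.swap hf).subset fun p hp => ⟨p.swap, hp, rfl⟩
  calc ∑ᶠ a, ∑ᶠ b, f a b = ∑ᶠ p : α × β, f p.1 p.2 := (finsum_curry (uncurry f) hf).symm
    _ = ∑ᶠ q : β × α, f q.2 q.1 := (finsum_comp_equiv (Equiv.prodComm β α)).symm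
    _ = ∑ᶠ b, ∑ᶠ a, f a b := finsum_curry (uncurry fun b a => f a b) hf'

theorem finsum_mem_setOf_eq_sum_fin {p : ℕ → Prop} [DecidablePred p] {n : ℕ}
    (hp : ∀ j, p j → j < n) (f : ℕ → M) :
    ∑ᶠ j ∈ {j | p j}, f j = ∑ j : Fin n, if p j then f j else 0 := by
  rw [finsum_mem_eq_sum_of_subset f (t := (range n).filter p), sum_filter,
    Fin.sum_univ_eq_sum_range (fun j => if p j then f j else 0)]
  · exact fun j ⟨hj, _⟩ => by simpa using ⟨hp j hj, hj⟩
  · exact fun j hj => by simpa using (mem_filter.mp hj).2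

end Finsum

namespace YoungDiagram

variable {μ : YoungDiagram} {i j : ℕ}

theorem rowLen_eq_zero_of_card_le (hi : μ.card ≤ i) : μ.rowLen i = 0 := by
  by_contra hne
  have hcol : i < μ.colLen 0 :=
    mem_iff_lt_colLen.mp (mem_iff_lt_rowLen.mpr (Nat.pos_of_ne_zero hne))
  have : μ.colLen 0 ≤ μ.card := (colLen_eq_card μ).trans_le (card_filter_le _ _)
  omega

theorem rowLen_eq_of_forall_mem_iff {m : ℕ} (H : ∀ k, (i, k) ∈ μ ↔ k < m) : μ.rowLen i = m :=
  eq_of_forall_lt_iff fun k => by rw [← mem_iff_lt_rowLen, H]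

theorem finite_Iic (μ : YoungDiagram) : (Set.Iic μ).Finite :=
  (μ.cells.powerset.finite_toSet.preimage fun _ _ _ _ => YoungDiagram.ext).subset
    fun ν hν => by simpa [cells_subset_iff] using hν

def IsAddableRow (μ : YoungDiagram) (j : ℕ) : Prop :=
  ∀ i < j, μ.rowLen j < μ.rowLen i

def IsRemovableRow (μ : YoungDiagram) (i : ℕ) : Prop :=
  μ.rowLen (i + 1) < μ.rowLen i

instance (μ : YoungDiagram) : DecidablePred μ.IsAddableRow :=
  fun j => inferInstanceAs (Decidable (∀ i < j, μ.rowLen j < μ.rowLen i))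

instance (μ : YoungDiagram) : DecidablePred μ.IsRemovableRow :=
  fun i => inferInstanceAs (Decidable (μ.rowLen (i + 1) < μ.rowLen i))

def addToRow (μ : YoungDiagram) (j : ℕ) : YoungDiagram :=
  if h : μ.IsAddableRow j then
    { cells := insert (j, μ.rowLen j) μ.cells
      isLowerSet := by
        rintro ⟨i, k⟩ ⟨i', k'⟩ hle hc
        obtain ⟨hi, hk⟩ := Prod.mk_le_mk.mp hle
        simp only [coe_insert, Set.mem_insert_iff, Prod.mk.injEq, mem_coe, mem_cells,
          mem_iff_lt_rowLen] at hc ⊢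
        rcases hc with ⟨rfl, rfl⟩ | hc
        · rcases hi.lt_or_eq with hi | rfl
          · exact .inr (hk.trans_lt (h i' hi))
          · omega
        · exact .inr ((hk.trans_lt hc).trans_le (μ.rowLen_anti _ _ hi)) }
  else μ

def removeFromRow (μ : YoungDiagram) (i : ℕ) : YoungDiagram :=
  if h : μ.IsRemovableRow i then
    { cells := μ.cells.erase (i, μ.rowLen i - 1)
      isLowerSet := by
        rintro ⟨i₁, k₁⟩ ⟨i₂, k₂⟩ hle hc
        obtain ⟨hi, hk⟩ := Prod.mk_le_mk.mp hle
        simp only [coe_erase, Set.mem_sdiff, Set.mem_singleton_iff, Prod.mk.injEq, mem_coe,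
          mem_cells, mem_iff_lt_rowLen] at hc ⊢
        have h₂ := μ.rowLen_anti _ _ hi
        refine ⟨(hk.trans_lt hc.1).trans_le h₂, fun ⟨hi₂, hk₂⟩ => ?_⟩
        subst hi₂
        rcases hi.lt_or_eq with hi | rfl
        · have := μ.rowLen_anti (i₂ + 1) _ hi
          unfold IsRemovableRow at h
          omega
        · omega }
  else μ

theorem mem_addToRow (h : μ.IsAddableRow j) {c : ℕ × ℕ} :
    c ∈ μ.addToRow j ↔ c = (j, μ.rowLen j) ∨ c ∈ μ := by
  rw [addToRow, dif_pos h, ← mem_cells, mem_insert, mem_cells]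

theorem mem_removeFromRow (h : μ.IsRemovableRow i) {c : ℕ × ℕ} :
    c ∈ μ.removeFromRow i ↔ c ≠ (i, μ.rowLen i - 1) ∧ c ∈ μ := by
  rw [removeFromRow, dif_pos h, ← mem_cells, mem_erase, mem_cells]

theorem rowLen_addToRow (h : μ.IsAddableRow j) :
    (μ.addToRow j).rowLen = update μ.rowLen j (μ.rowLen j + 1) := by
  ext i
  refine rowLen_eq_of_forall_mem_iff fun k => ?_
  rw [mem_addToRow h, mem_iff_lt_rowLen]
  rcases eq_or_ne i j with rfl | hij
  · simp only [update_self, Prod.mk.injEq, true_and]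
    omega
  · simp [hij]

theorem rowLen_removeFromRow (h : μ.IsRemovableRow i) :
    (μ.removeFromRow i).rowLen = update μ.rowLen i (μ.rowLen i - 1) := by
  ext j
  refine rowLen_eq_of_forall_mem_iff fun k => ?_
  rw [mem_removeFromRow h, mem_iff_lt_rowLen]
  rcases eq_or_ne j i with rfl | hij
  · simp only [update_self, ne_eq, Prod.mk.injEq, true_and]
    unfold IsRemovableRow at h
    omega
  · simp [hij]

theorem card_addToRow (h : μ.IsAddableRow j) : (μ.addToRow j).card = μ.card + 1 := by
  rw [YoungDiagram.card, addToRow, dif_pos h, card_insert_of_notMem]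
  simp [mem_iff_lt_rowLen]

theorem card_removeFromRow (h : μ.IsRemovableRow i) : (μ.removeFromRow i).card + 1 = μ.card := by
  rw [YoungDiagram.card, removeFromRow, dif_pos h, card_erase_add_one]
  rw [mem_cells, mem_iff_lt_rowLen]
  unfold IsRemovableRow at h
  omega

theorem IsAddableRow.le_card (h : μ.IsAddableRow j) : j ≤ μ.card := by
  obtain _ | j := j
  · exact Nat.zero_le _
  · by_contra! hj
    have := h j j.lt_succ_self
    rw [rowLen_eq_zero_of_card_le (by omega : μ.card ≤ j)] at this
    omega

theorem IsRemovableRow.lt_card (h : μ.IsRemovableRow i) : i < μ.card := by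
  by_contra! hi
  unfold IsRemovableRow at h
  rw [rowLen_eq_zero_of_card_le hi] at h
  omega

theorem addBox_iff_exists_addToRow {τ η : YoungDiagram} :
    AddBox τ η ↔ ∃ j, τ.IsAddableRow j ∧ τ.addToRow j = η := by
  constructor
  · rintro ⟨hsub, hcard⟩
    obtain ⟨⟨j, x⟩, hcτ, hcells⟩ := exists_eq_insert_iff.mpr ⟨hsub, hcard.symm⟩
    have hmem : ∀ {d}, d ∈ η ↔ d = (j, x) ∨ d ∈ τ := by
      intro d; rw [← mem_cells, ← hcells, mem_insert, mem_cells]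
    have hcη : (j, x) ∈ η := hmem.mpr (.inl rfl)
    rw [mem_cells, mem_iff_lt_rowLen, not_lt] at hcτ
    -- the cells of `η` left of and above the new cell `(j, x)` lie in `τ`; this pins down `x`
    -- and makes row `j` addable
    have hx : x = τ.rowLen j := by
      refine le_antisymm (not_lt.mp fun hlt => ?_) hcτ
      rcases hmem.mp (η.up_left_mem le_rfl hlt.le hcη) with heq | hin
      · simp only [Prod.mk.injEq, true_and] at heq; omega
      · rw [mem_iff_lt_rowLen] at hin; omega
    subst hx
    have hadd : τ.IsAddableRow j := fun i hij => by
      rcases hmem.mp (η.up_left_mem hij.le le_rfl hcη) with heq | hin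
      · simp only [Prod.mk.injEq] at heq; omega
      · exact mem_iff_lt_rowLen.mp hin
    exact ⟨j, hadd, YoungDiagram.ext (by rw [addToRow, dif_pos hadd, ← hcells])⟩
  · rintro ⟨j, hj, rfl⟩
    refine ⟨fun c hc => ?_, card_addToRow hj⟩
    rw [mem_cells, mem_addToRow hj]
    exact .inr hc

theorem IsAddableRow.isRemovableRow_addToRow (h : μ.IsAddableRow j) :
    (μ.addToRow j).IsRemovableRow j := by
  unfold IsRemovableRow
  rw [rowLen_addToRow h, update_self, update_of_ne (Nat.succ_ne_self j)]
  exact Nat.lt_succ_of_le (μ.rowLen_anti j (j + 1) (Nat.le_succ j))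

theorem removeFromRow_addToRow (h : μ.IsAddableRow j) : (μ.addToRow j).removeFromRow j = μ := by
  have hnew : (j, μ.rowLen j) ∉ μ := by simp [mem_iff_lt_rowLen]
  ext c
  rw [mem_cells, mem_cells, mem_removeFromRow h.isRemovableRow_addToRow, mem_addToRow h,
    rowLen_addToRow h, update_self, Nat.add_sub_cancel]
  exact ⟨fun ⟨hne, hc⟩ => hc.resolve_left hne, fun hc => ⟨fun heq => hnew (heq ▸ hc), .inr hc⟩⟩

theorem IsRemovableRow.isAddableRow_removeFromRow (h : μ.IsRemovableRow i) :
    (μ.removeFromRow i).IsAddableRow i := by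
  intro k hk
  rw [rowLen_removeFromRow h, update_self, update_of_ne hk.ne]
  have := μ.rowLen_anti k i hk.le
  unfold IsRemovableRow at h
  omega

theorem addToRow_removeFromRow (h : μ.IsRemovableRow i) : (μ.removeFromRow i).addToRow i = μ := by
  have hlast : (i, μ.rowLen i - 1) ∈ μ := by
    unfold IsRemovableRow at h
    rw [mem_iff_lt_rowLen]
    omega
  ext c
  rw [mem_cells, mem_cells, mem_addToRow h.isAddableRow_removeFromRow, mem_removeFromRow h,
    rowLen_removeFromRow h, update_self]
  exact ⟨fun hc => hc.elim (· ▸ hlast) And.right, fun hc => (em _).imp_right (⟨·, hc⟩)⟩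

theorem addBox_iff_exists_removeFromRow {α η : YoungDiagram} :
    AddBox α η ↔ ∃ i, η.IsRemovableRow i ∧ η.removeFromRow i = α := by
  rw [addBox_iff_exists_addToRow]
  constructor
  · rintro ⟨j, hj, rfl⟩
    exact ⟨j, hj.isRemovableRow_addToRow, removeFromRow_addToRow hj⟩
  · rintro ⟨i, hi, rfl⟩
    exact ⟨i, hi.isAddableRow_removeFromRow, addToRow_removeFromRow hi⟩

theorem injOn_addToRow (μ : YoungDiagram) : Set.InjOn μ.addToRow {j | μ.IsAddableRow j} := by
  intro j hj j' hj' heq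
  have := congr_fun (rowLen_addToRow hj) j
  rw [heq, rowLen_addToRow hj'] at this
  by_contra hne
  rw [update_self, update_of_ne hne] at this
  omega

theorem injOn_removeFromRow (μ : YoungDiagram) :
    Set.InjOn μ.removeFromRow {i | μ.IsRemovableRow i} := by
  intro i hi i' hi' heq
  have := congr_fun (rowLen_removeFromRow hi) i
  rw [heq, rowLen_removeFromRow hi'] at this
  by_contra hne
  rw [update_self, update_of_ne hne] at this
  have hi : μ.rowLen (i + 1) < μ.rowLen i := hi
  omega

variable {M : Type*} [AddCommMonoid M]

theorem finsum_addBox_eq_sum_addToRow (τ : YoungDiagram) (g : YoungDiagram → M) {n : ℕ}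
    (hn : τ.card < n) :
    ∑ᶠ (η) (_ : AddBox τ η), g η =
      ∑ j : Fin n, if τ.IsAddableRow j then g (τ.addToRow j) else 0 := by
  have hset : {η | AddBox τ η} = τ.addToRow '' {j | τ.IsAddableRow j} := by
    ext η
    simp [addBox_iff_exists_addToRow]
  change ∑ᶠ η ∈ {η | AddBox τ η}, g η = _
  rw [hset, finsum_mem_image τ.injOn_addToRow,
    finsum_mem_setOf_eq_sum_fin fun j hj => (IsAddableRow.le_card hj).trans_lt hn]

theorem finsum_addBox_eq_sum_removeFromRow (η : YoungDiagram) (g : YoungDiagram → M) {n : ℕ}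
    (hn : η.card ≤ n) :
    ∑ᶠ (α) (_ : AddBox α η), g α =
      ∑ i : Fin n, if η.IsRemovableRow i then g (η.removeFromRow i) else 0 := by
  have hset : {α | AddBox α η} = η.removeFromRow '' {i | η.IsRemovableRow i} := by
    ext α
    simp [addBox_iff_exists_removeFromRow]
  change ∑ᶠ α ∈ {α | AddBox α η}, g α = _
  rw [hset, finsum_mem_image η.injOn_removeFromRow,
    finsum_mem_setOf_eq_sum_fin fun i hi => (IsRemovableRow.lt_card hi).trans_le hn]

end YoungDiagram

section SkewSchur

variable (σ : Type) [Fintype σ] [DecidableEq σ]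

theorem hPolyZ_zero : hPolyZ σ 0 = 1 := by
  simp [hPolyZ, hPoly, Sym.eq_nil_of_card_zero]

theorem hPolyZ_of_neg {z : ℤ} (hz : z < 0) : hPolyZ σ z = 0 :=
  if_neg hz.not_ge

theorem skewSchurPoly_eq_det_jacobiTrudi {μ ν : YoungDiagram} {n : ℕ} (hn : μ.card + ν.card ≤ n) :
    skewSchurPoly σ μ ν =
      (jacobiTrudi (hPolyZ σ) n (fun i => μ.rowLen i) (fun j => ν.rowLen j)).det := by
  induction n, hn using Nat.le_induction with
  | base => rfl
  | succ n hn ih =>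
    rw [ih, det_jacobiTrudi_succ (hPolyZ_zero σ) (fun _ => hPolyZ_of_neg σ)]
    · simp [YoungDiagram.rowLen_eq_zero_of_card_le (by omega : μ.card ≤ n),
        YoungDiagram.rowLen_eq_zero_of_card_le (by omega : ν.card ≤ n)]
    · simp [YoungDiagram.rowLen_eq_zero_of_card_le (by omega : μ.card ≤ n)]

theorem skewSchurPoly_eq_zero_of_not_le {μ ν : YoungDiagram} (h : ¬ν ≤ μ) :
    skewSchurPoly σ μ ν = 0 := by
  obtain ⟨⟨k, x⟩, hν, hμ⟩ := not_subset.mp (mt YoungDiagram.cells_subset_iff.mp h)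
  rw [YoungDiagram.mem_cells, YoungDiagram.mem_iff_lt_rowLen] at hν hμ
  have hk : k < μ.card + ν.card := by
    by_contra! hk
    rw [YoungDiagram.rowLen_eq_zero_of_card_le (by omega : ν.card ≤ k)] at hν
    omega
  rw [skewSchurPoly_eq_det_jacobiTrudi σ le_rfl]
  exact det_jacobiTrudi_eq_zero_of_lt (fun _ => hPolyZ_of_neg σ)
    (fun _ _ h => by simpa using μ.rowLen_anti _ _ h)
    (fun _ _ h => by simpa using ν.rowLen_anti _ _ h) hk (by omega)

variable {σ}

theorem det_jacobiTrudi_update_rowLen_add_one {lam τ : YoungDiagram} {n : ℕ}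
    (hn : lam.card + τ.card < n) (j : Fin n) :
    (jacobiTrudi (hPolyZ σ) n (fun i => lam.rowLen i)
        (update (fun j => τ.rowLen j) j (τ.rowLen j + 1))).det =
      if τ.IsAddableRow j then skewSchurPoly σ lam (τ.addToRow j) else 0 := by
  split_ifs with hj
  · have hcard : lam.card + (τ.addToRow j).card ≤ n := by
      rw [YoungDiagram.card_addToRow hj]; omega
    rw [skewSchurPoly_eq_det_jacobiTrudi σ hcard, YoungDiagram.rowLen_addToRow hj]
    congr 2
    funext k
    rcases eq_or_ne k j with rfl | hk <;> simp [*]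
  · -- rows `j - 1` and `j` of `τ` have equal length, so the new columns `j - 1` and `j` agree
    obtain ⟨i, hij, hi⟩ := by simpa [YoungDiagram.IsAddableRow] using hj
    obtain ⟨j', hj'⟩ : ∃ j', (j : ℕ) = j' + 1 := ⟨j - 1, by omega⟩
    rw [hj'] at hi ⊢
    have := τ.rowLen_anti i j' (by omega)
    have := τ.rowLen_anti j' (j' + 1) (Nat.le_succ j')
    exact det_jacobiTrudi_update_right_eq_zero _ (hj' ▸ j.is_lt) (by omega)

theorem det_jacobiTrudi_update_rowLen_sub_one {lam τ : YoungDiagram} {n : ℕ}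
    (hn : lam.card + τ.card < n) (i : Fin n) :
    (jacobiTrudi (hPolyZ σ) n (update (fun i => lam.rowLen i) i (lam.rowLen i - 1))
        (fun j => τ.rowLen j)).det =
      if lam.IsRemovableRow i then skewSchurPoly σ (lam.removeFromRow i) τ else 0 := by
  split_ifs with hi
  · have hcard : (lam.removeFromRow i).card + τ.card ≤ n := by
      have := YoungDiagram.card_removeFromRow hi; omega
    rw [skewSchurPoly_eq_det_jacobiTrudi σ hcard, YoungDiagram.rowLen_removeFromRow hi]
    have : 0 < lam.rowLen i := (Nat.zero_le _).trans_lt hi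
    congr 2
    funext k
    rcases eq_or_ne k i with rfl | hk <;> simp [*]
  · have heq : lam.rowLen i = lam.rowLen (i + 1) :=
      le_antisymm (not_lt.mp hi) (lam.rowLen_anti _ _ (Nat.le_succ _))
    rcases Nat.lt_or_ge (i + 1) n with hin | hin
    · exact det_jacobiTrudi_update_left_eq_zero _ hin (by simp [heq])
    · exact det_jacobiTrudi_update_left_eq_zero_of_le (fun _ => hPolyZ_of_neg σ) (by omega)
        fun j => by simp [YoungDiagram.rowLen_eq_zero_of_card_le (by omega : lam.card ≤ i)]

theorem finsum_addBox_map_skewSchurPoly {M : Type*} [AddCommMonoid M]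
    (φ : MvPolynomial σ ℚ →+ M) (lam τ : YoungDiagram) :
    ∑ᶠ (η) (_ : AddBox τ η), φ (skewSchurPoly σ lam η) =
      ∑ᶠ (α) (_ : AddBox α lam), φ (skewSchurPoly σ α τ) := by
  obtain ⟨n, hn⟩ : ∃ n, lam.card + τ.card < n := ⟨_, Nat.lt_succ_self _⟩
  rw [YoungDiagram.finsum_addBox_eq_sum_addToRow τ _ (by omega : τ.card < n),
    YoungDiagram.finsum_addBox_eq_sum_removeFromRow lam _ (by omega : lam.card ≤ n)]
  simp only [← map_zero φ, ← apply_ite φ, ← det_jacobiTrudi_update_rowLen_add_one hn,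
    ← det_jacobiTrudi_update_rowLen_sub_one hn, ← map_sum]
  rw [sum_det_jacobiTrudi_update_right_eq_sum_update_left]

end SkewSchur

/-- For any partitions `λ, μ` and finite variable sets `x = (x_1,…,x_N)`,
`y = (y_1,…,y_M)`:
`∑_η ∑_{τ∈η−□} s_{λ/η}(x) s_{μ/τ}(y) = ∑_η ∑_{α∈λ−□} s_{α/η}(x) s_{μ/η}(y)`. -/
theorem see_saw_sum (lam mu : YoungDiagram) (N M : ℕ) :
    (∑ᶠ eta : YoungDiagram, ∑ᶠ (tau : YoungDiagram) (_ : AddBox tau eta),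
        MvPolynomial.rename (Sum.inl : Fin N → Fin N ⊕ Fin M)
            (skewSchurPoly (Fin N) lam eta) *
          MvPolynomial.rename (Sum.inr : Fin M → Fin N ⊕ Fin M)
            (skewSchurPoly (Fin M) mu tau)) =
      ∑ᶠ eta : YoungDiagram, ∑ᶠ (alpha : YoungDiagram) (_ : AddBox alpha lam),
        MvPolynomial.rename (Sum.inl : Fin N → Fin N ⊕ Fin M)
            (skewSchurPoly (Fin N) alpha eta) *
          MvPolynomial.rename (Sum.inr : Fin M → Fin N ⊕ Fin M)
            (skewSchurPoly (Fin M) mu eta) := by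
  rw [finsum_comm_of_hasFiniteSupport]
  · refine finsum_congr fun tau => ?_
    exact finsum_addBox_map_skewSchurPoly
      ((AddMonoidHom.mulRight (MvPolynomial.rename Sum.inr (skewSchurPoly (Fin M) mu tau))).comp
        (MvPolynomial.rename Sum.inl).toAddMonoidHom) lam tau
  · refine (lam.finite_Iic.prod lam.finite_Iic).subset fun ⟨eta, tau⟩ hne => ?_
    have hadd : AddBox tau eta := by_contra fun h => hne (by simp [h])
    have hle : eta ≤ lam :=
      by_contra fun h => hne (by simp [skewSchurPoly_eq_zero_of_not_le _ h])
    exact ⟨hle, (YoungDiagram.cells_subset_iff.mp hadd.1).trans hle⟩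

end
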